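/- arXiv:1406.4170 — 2 statements merged into one kernel-verified Lean document; each statement's English description precedes it below -/
import Mathlib

section
/- Let G be a graph with Godsil-McKay switching set X and switched graph G'. If all vertices of X have the same degree in G, then the multiset {λ_G(x,y) : x,y ∈ X} of common-neighbor counts of pairs inside X equals the corresponding multiset {λ_{G'}(x,y) : x,y ∈ X} for G'. -/
open Finset
open scoped Classical

variable {V : Type*}

/-- `y` has exactly half of the vertices of `X` as neighbours in `G`. -/
def halfIn (G : SimpleGraph V) (X : Finset V) (y : V) : Prop :=
  2 * (X.filter (G.Adj y)).card = X.card

/-- A Godsil-McKay switching set: `X` induces a regular subgraph, and every vertex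
outside `X` has `0`, `|X|/2` or `|X|` neighbours in `X`. -/
def IsGMSwitchingSet (G : SimpleGraph V) (X : Finset V) : Prop :=
  (∃ k, ∀ x ∈ X, (X.filter (G.Adj x)).card = k) ∧
    ∀ y ∉ X, (X.filter (G.Adj y)).card = 0 ∨ halfIn G X y ∨
      (X.filter (G.Adj y)).card = X.card

/-- The graph obtained from `G` by Godsil-McKay switching with respect to `X`:
for each vertex `y ∉ X` having exactly `|X|/2` neighbours in `X`, the edges from `y`
to `X` are replaced by the edges from `y` to the other `|X|/2` vertices of `X`. -/
noncomputable def GMswitch (G : SimpleGraph V) (X : Finset V) : SimpleGraph V where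
  Adj u v :=
    if u ∈ X ↔ v ∈ X then G.Adj u v
    else if halfIn G X (if u ∈ X then v else u) then ¬ G.Adj u v else G.Adj u v
  symm := by
    constructor
    intro u v h
    by_cases hm : (u ∈ X ↔ v ∈ X)
    · rw [if_pos hm] at h
      rw [if_pos hm.symm]
      exact h.symm
    · have hm' : ¬ (v ∈ X ↔ u ∈ X) := fun hh => hm hh.symm
      rw [if_neg hm] at h
      rw [if_neg hm']
      have he : (if v ∈ X then u else v) = (if u ∈ X then v else u) := by
        by_cases hu : u ∈ X <;> by_cases hv : v ∈ X <;> simp [hu, hv] at hm ⊢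
      rw [he]
      by_cases hc : halfIn G X (if u ∈ X then v else u)
      · rw [if_pos hc] at h ⊢
        exact fun ha => h ha.symm
      · rw [if_neg hc] at h ⊢
        exact h.symm
  loopless := by
    constructor
    intro u h
    rw [if_pos Iff.rfl] at h
    exact G.irrefl h

/-- `lam G x y` is the number of common neighbours of `x` and `y` in `G`. -/
noncomputable def lam [Fintype V] (G : SimpleGraph V) (x y : V) : ℕ :=
  (univ.filter fun z => G.Adj x z ∧ G.Adj y z).card


/-!
Inside `X` nothing changes, and the only switched vertices are those of the set `H` of
vertices outside `X` with exactly `|X|/2` neighbours in `X`. For `x ∈ X` the degree of `x`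
counts its neighbours in `X` (a constant, by regularity), the vertices with all of `X` as
neighbours (independent of `x`) and its neighbours in `H`; so the equal degrees force every
`x ∈ X` to have the same number `h` of neighbours in `H`, and double counting the edges between
`X` and `H` gives `|H| = 2h`. After switching, the common neighbours of `x, y ∈ X` inside `H`
are their former common non-neighbours there, of which there are
`|H| - 2h + |N(x) ∩ N(y) ∩ H| = |N(x) ∩ N(y) ∩ H|`. Hence `λ(x, y)` itself is unchanged for
all `x, y ∈ X`.
-/

namespace Finset

variable {α : Type*}

theorem card_filter_not_and_not_eq_card_filter_and (s : Finset α) (p q : α → Prop)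
    [DecidablePred p] [DecidablePred q]
    (hp : 2 * #(s.filter p) = #s) (hq : 2 * #(s.filter q) = #s) :
    #(s.filter fun a => ¬p a ∧ ¬q a) = #(s.filter fun a => p a ∧ q a) := by
  have hor := card_filter_add_card_filter_not (s := s) fun a => p a ∨ q a
  have hunion := card_union_add_card_inter (s.filter p) (s.filter q)
  rw [← filter_or, ← filter_and] at hunion
  simp only [not_or] at hor
  omega

variable [Fintype α] [DecidableEq α]

theorem card_filter_univ_eq_add_card_filter_compl (s : Finset α) (p : α → Prop)
    [DecidablePred p] :
    #(univ.filter p) = #(s.filter p) + #(sᶜ.filter p) := by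
  rw [← card_union_of_disjoint (disjoint_filter_filter disjoint_compl_right), ← filter_union,
    union_compl]

theorem card_filter_univ_eq_of_card_filter_eq (s : Finset α) {p q : α → Prop}
    [DecidablePred p] [DecidablePred q]
    (hout : ∀ a ∉ s, p a ↔ q a) (hin : #(s.filter p) = #(s.filter q)) :
    #(univ.filter p) = #(univ.filter q) := by
  rw [card_filter_univ_eq_add_card_filter_compl s, card_filter_univ_eq_add_card_filter_compl s,
    hin, filter_congr fun a ha => hout a (mem_compl.1 ha)]

end Finset

namespace GodsilMcKay

variable [Fintype V] {G : SimpleGraph V} {X : Finset V} {x y : V}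

noncomputable def switchedSet (G : SimpleGraph V) (X : Finset V) : Finset V :=
  Xᶜ.filter (halfIn G X)

theorem mem_switchedSet {z : V} : z ∈ switchedSet G X ↔ z ∉ X ∧ halfIn G X z := by
  simp [switchedSet]

theorem GMswitch_adj_of_mem_switchedSet {z : V} (hx : x ∈ X) (hz : z ∈ switchedSet G X) :
    (GMswitch G X).Adj x z ↔ ¬G.Adj x z := by
  rw [mem_switchedSet] at hz
  simp [GMswitch, hx, hz.1, hz.2]

theorem GMswitch_adj_of_notMem_switchedSet {z : V} (hx : x ∈ X) (hz : z ∉ switchedSet G X) :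
    (GMswitch G X).Adj x z ↔ G.Adj x z := by
  by_cases hzX : z ∈ X
  · simp [GMswitch, hx, hzX]
  · have hhalf : ¬halfIn G X z := fun h => hz (mem_switchedSet.2 ⟨hzX, h⟩)
    simp [GMswitch, hx, hzX, hhalf]

theorem lam_GMswitch_eq_of_two_mul_card (hx : x ∈ X) (hy : y ∈ X)
    (hxH : 2 * #((switchedSet G X).filter (G.Adj x)) = #(switchedSet G X))
    (hyH : 2 * #((switchedSet G X).filter (G.Adj y)) = #(switchedSet G X)) :
    lam (GMswitch G X) x y = lam G x y := by
  rw [lam, lam]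
  refine card_filter_univ_eq_of_card_filter_eq (switchedSet G X) (fun z hz => ?_) ?_
  · rw [GMswitch_adj_of_notMem_switchedSet hx hz, GMswitch_adj_of_notMem_switchedSet hy hz]
  · rw [filter_congr fun z hz => by
      rw [GMswitch_adj_of_mem_switchedSet hx hz, GMswitch_adj_of_mem_switchedSet hy hz]]
    exact card_filter_not_and_not_eq_card_filter_and _ _ _ hxH hyH

theorem compl_filter_adj_and_not_halfIn (hX : IsGMSwitchingSet G X) (hx : x ∈ X) :
    Xᶜ.filter (fun z => G.Adj x z ∧ ¬halfIn G X z) =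
      Xᶜ.filter (fun z => #(X.filter (G.Adj z)) = #X) := by
  refine filter_congr fun z hz => ?_
  have hxz : G.Adj x z ↔ G.Adj z x := G.adj_comm x z
  constructor
  · rintro ⟨hadj, hhalf⟩
    rcases hX.2 z (mem_compl.1 hz) with hnone | hhalf' | hall
    · exact absurd (hxz.1 hadj) (card_filter_eq_zero_iff.1 hnone x hx)
    · exact absurd hhalf' hhalf
    · exact hall
  · intro hall
    have hXpos : 0 < #X := card_pos.2 ⟨x, hx⟩
    refine ⟨hxz.2 (card_filter_eq_iff.1 hall x hx), fun hhalf => ?_⟩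
    rw [halfIn, hall] at hhalf
    omega

theorem degree_eq_of_mem (hX : IsGMSwitchingSet G X) (hx : x ∈ X) :
    G.degree x = #(X.filter (G.Adj x)) + #((switchedSet G X).filter (G.Adj x)) +
      #(Xᶜ.filter fun z => #(X.filter (G.Adj z)) = #X) := by
  have hsplit := card_filter_add_card_filter_not (s := Xᶜ.filter (G.Adj x)) (halfIn G X)
  rw [filter_filter, filter_filter, compl_filter_adj_and_not_halfIn hX hx] at hsplit
  rw [← SimpleGraph.card_neighborFinset_eq_degree, SimpleGraph.neighborFinset_eq_filter,
    card_filter_univ_eq_add_card_filter_compl X, ← hsplit, switchedSet, filter_filter]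
  simp only [and_comm, add_assoc]

theorem card_switchedSet_filter_adj_eq (hX : IsGMSwitchingSet G X)
    (hdeg : ∃ d, ∀ x ∈ X, G.degree x = d) {w : V} (hx : x ∈ X) (hw : w ∈ X) :
    #((switchedSet G X).filter (G.Adj w)) = #((switchedSet G X).filter (G.Adj x)) := by
  obtain ⟨k, hk⟩ := hX.1
  obtain ⟨d, hd⟩ := hdeg
  have hdx := degree_eq_of_mem hX hx
  have hdw := degree_eq_of_mem hX hw
  rw [hd x hx, hk x hx] at hdx
  rw [hd w hw, hk w hw] at hdw
  omega

theorem two_mul_card_switchedSet_filter_adj (hX : IsGMSwitchingSet G X)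
    (hdeg : ∃ d, ∀ x ∈ X, G.degree x = d) (hx : x ∈ X) :
    2 * #((switchedSet G X).filter (G.Adj x)) = #(switchedSet G X) := by
  have hXpos : 0 < #X := card_pos.2 ⟨x, hx⟩
  have hcount := sum_card_bipartiteAbove_eq_sum_card_bipartiteBelow
    (s := X) (t := switchedSet G X) (r := G.Adj)
  simp only [bipartiteAbove] at hcount
  rw [sum_congr rfl fun w hw => card_switchedSet_filter_adj_eq hX hdeg hx hw, sum_const,
    smul_eq_mul] at hcount
  have hhalves :
      2 * ∑ z ∈ switchedSet G X, #(X.bipartiteBelow G.Adj z) = #(switchedSet G X) * #X := by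
    rw [mul_sum, sum_congr rfl fun z hz => ?_, sum_const, smul_eq_mul]
    rw [bipartiteBelow, filter_congr fun a _ => G.adj_comm a z]
    exact (mem_switchedSet.1 hz).2
  refine Nat.eq_of_mul_eq_mul_left hXpos ?_
  linarith

theorem lam_GMswitch_eq (hX : IsGMSwitchingSet G X) (hdeg : ∃ d, ∀ x ∈ X, G.degree x = d)
    (hx : x ∈ X) (hy : y ∈ X) : lam (GMswitch G X) x y = lam G x y :=
  lam_GMswitch_eq_of_two_mul_card hx hy (two_mul_card_switchedSet_filter_adj hX hdeg hx)
    (two_mul_card_switchedSet_filter_adj hX hdeg hy)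

end GodsilMcKay

theorem lam_multiset_inside_unchanged_general
    {V : Type*} [Fintype V]
    (G : SimpleGraph V) (X : Finset V) (hX : IsGMSwitchingSet G X)
    (hdeg : ∃ d, ∀ x ∈ X, G.degree x = d) :
    ((X ×ˢ X).val.map fun p => lam G p.1 p.2) =
      ((X ×ˢ X).val.map fun p => lam (GMswitch G X) p.1 p.2) := by
  refine Multiset.map_congr rfl fun p hp => ?_
  obtain ⟨hx, hy⟩ := mem_product.1 hp
  exact (GodsilMcKay.lam_GMswitch_eq hX hdeg hx hy).symm

/-- **Lemma 3(iii), auxiliary fact**: if all vertices of the switching set `X` have the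
same degree, then the multiset of common-neighbour counts of (ordered) pairs of
vertices of `X` is unchanged by Godsil-McKay switching. -/
theorem lam_multiset_inside_unchanged
    {V : Type*} [Fintype V] [DecidableEq V]
    (G : SimpleGraph V) (X : Finset V) (hX : IsGMSwitchingSet G X)
    (hdeg : ∃ d, ∀ x ∈ X, G.degree x = d) :
    ((X ×ˢ X).val.map fun p => lam G p.1 p.2) =
      ((X ×ˢ X).val.map fun p => lam (GMswitch G X) p.1 p.2) :=
  lam_multiset_inside_unchanged_general G X hX hdeg
end

section
/- Let T be a regular tournament matrix of order m > 1, N = T ⊗ J₂ + I_{2m}, and R = I_m ⊗ (J₂ - I₂). Then RN = J - Nᵀ, where J is the all-ones matrix of order 2m. -/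
open Finset Matrix
open scoped Classical

variable {V : Type*}

open Kronecker

/-- The `2 × 2` all-ones matrix. -/
def J2 : Matrix (Fin 2) (Fin 2) ℝ := Matrix.of fun _ _ => 1

/-- The all-ones matrix of order `2m` (indexed by `Fin m × Fin 2`). -/
def Jbig (m : ℕ) : Matrix (Fin m × Fin 2) (Fin m × Fin 2) ℝ := Matrix.of fun _ _ => 1

/-- `N = T ⊗ J₂ + I`. -/
noncomputable def Nmat {m : ℕ} (T : Matrix (Fin m) (Fin m) ℝ) :
    Matrix (Fin m × Fin 2) (Fin m × Fin 2) ℝ :=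
  T ⊗ₖ J2 + 1

/-- `R = I_m ⊗ (J₂ - I₂)`. -/
noncomputable def Rmat (m : ℕ) : Matrix (Fin m × Fin 2) (Fin m × Fin 2) ℝ :=
  (1 : Matrix (Fin m) (Fin m) ℝ) ⊗ₖ (J2 - 1)

/- Since `(J₂ - I₂) J₂ = J₂`, the Kronecker factors multiply to `RN = T ⊗ J₂ + R`, while
`Nᵀ = Tᵀ ⊗ J₂ + I` and `R + I = I ⊗ J₂`. Hence `RN + Nᵀ = (T + Tᵀ + I) ⊗ J₂`, which is
`J ⊗ J₂ = J` exactly when `T + Tᵀ = J - I`. -/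

lemma J2_transpose : J2ᵀ = J2 := rfl

lemma J2_sub_one_mul_J2 : (J2 - 1) * J2 = J2 := by
  have hsq : J2 * J2 = 2 • J2 := by
    ext i j
    simp [J2, Matrix.mul_apply, two_smul]
  rw [sub_mul, hsq, one_mul, two_smul, add_sub_cancel_right]

lemma Rmat_add_one (m : ℕ) : Rmat m + 1 = (1 : Matrix (Fin m) (Fin m) ℝ) ⊗ₖ J2 := by
  rw [Rmat, ← one_kronecker_one, ← kronecker_add, sub_add_cancel]

lemma Rmat_mul_Nmat_eq {m : ℕ} (T : Matrix (Fin m) (Fin m) ℝ) :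
    Rmat m * Nmat T = T ⊗ₖ J2 + Rmat m := by
  rw [Nmat, mul_add, mul_one, Rmat, ← mul_kronecker_mul, one_mul, J2_sub_one_mul_J2]

lemma Nmat_transpose {m : ℕ} (T : Matrix (Fin m) (Fin m) ℝ) :
    (Nmat T)ᵀ = Tᵀ ⊗ₖ J2 + 1 := by
  rw [Nmat, transpose_add, transpose_one, ← J2_transpose, kroneckerMap_transpose, J2_transpose]

lemma of_one_kronecker_J2 (m : ℕ) :
    Matrix.of (fun _ _ => (1 : ℝ)) ⊗ₖ J2 = Jbig m := by
  ext
  simp [J2, Jbig]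

theorem Rmat_mul_Nmat_general {m : ℕ}
    (T : Matrix (Fin m) (Fin m) ℝ)
    (htour : T + Tᵀ = Matrix.of (fun _ _ => (1 : ℝ)) - 1) :
    Rmat m * Nmat T = Jbig m - (Nmat T)ᵀ := by
  rw [eq_sub_iff_add_eq, Rmat_mul_Nmat_eq, Nmat_transpose]
  calc T ⊗ₖ J2 + Rmat m + (Tᵀ ⊗ₖ J2 + 1)
      = (T + Tᵀ + 1) ⊗ₖ J2 := by
        rw [add_kronecker, add_kronecker, ← Rmat_add_one]
        abel
    _ = Jbig m := by rw [htour, sub_add_cancel, of_one_kronecker_J2]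

/-- For a regular tournament matrix `T` of order `m > 1`, with `N = T ⊗ J₂ + I` and
`R = I ⊗ (J₂ - I₂)`, we have `RN = J - Nᵀ`. -/
theorem Rmat_mul_Nmat {m : ℕ} (hm : 1 < m)
    (T : Matrix (Fin m) (Fin m) ℝ)
    (h01 : ∀ i j, T i j = 0 ∨ T i j = 1)
    (htour : T + Tᵀ = Matrix.of (fun _ _ => (1 : ℝ)) - 1)
    (hreg : ∃ c, ∀ i, ∑ j, T i j = c) :
    Rmat m * Nmat T = Jbig m - (Nmat T)ᵀ :=
  Rmat_mul_Nmat_general T htour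
end
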